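/- arXiv:2203.03310 — 7 statements merged into one kernel-verified Lean document; each statement's English description precedes it below -/
import Mathlib

section
/- The Drinfeld–Vladut bound: A(q) ≤ √q − 1 for every prime power q. -/
/-!
Normalize the Frobenius eigenvalues to the unit complex numbers `βᵢ = αᵢ / √q`. For every `n`,
`∑ᵢ |∑_{r<n} βᵢ ^ r|² ≥ 0` (Fejér's kernel is nonnegative); expanding the squares expresses this
through the power sums `∑ᵢ Re βᵢ ^ k = (q ^ k + 1 - N k) / √q ^ k`, and `N k ≥ N 1` turns it into
`N 1 · Fₙ(1/√q) ≤ g n + Oₙ(1)` with `Fₙ(t) = ∑_{j<n} ∑_{k<j} t ^ (k+1)`. Letting `g → ∞` bounds the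
limsup by `n / Fₙ(1/√q)`, which by Cesàro tends to `(1 - t) / t = √q - 1` as `n → ∞`.
-/

open Filter

/-- The numerical data attached to a smooth projective absolutely irreducible curve `C`
of genus `g` over the finite field `F_q` by the Weil conjectures: `α i` are the Frobenius
eigenvalues, of absolute value `√q`; `N r` is the number of `F_{q^r}`-rational points,
given by `N r = q^r + 1 − ∑ i, (α i)^r`; and `a d` is the (nonnegative) number of closed
points (places) of degree `d`, so that `N r = ∑_{d ∣ r} d · a d`. -/
structure WeilCurveData (q : ℕ) where
  g : ℕ
  N : ℕ → ℕ
  a : ℕ → ℕ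
  α : Fin (2 * g) → ℂ
  habs : ∀ i, ‖α i‖ = Real.sqrt q
  hN : ∀ r, 0 < r → (N r : ℂ) = (q : ℂ) ^ r + 1 - ∑ i, α i ^ r
  hdiv : ∀ r, 0 < r → N r = ∑ d ∈ r.divisors, d * a d

open Finset Topology

lemma Complex.normSq_geom_sum_of_norm_eq_one {β : ℂ} (hβ : ‖β‖ = 1) (n : ℕ) :
    normSq (∑ r ∈ range n, β ^ r) = n + 2 * ∑ j ∈ range n, ∑ k ∈ range j, (β ^ (k + 1)).re := by
  induction n with
  | zero => simp
  | succ n ih =>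
    have hβ' : normSq β = 1 := by rw [normSq_eq_norm_sq, hβ, one_pow]
    rw [geom_sum_succ, normSq_add, normSq_mul, hβ', one_mul, ih, normSq_one, map_one, mul_one,
      sum_range_succ _ n, mul_sum _ _ β, re_sum]
    simp only [← pow_succ']
    push_cast
    ring

/-- `n` times the Cesàro mean of the first `n` partial sums of `∑ t ^ (k + 1)`: the weight that
Fejér's kernel of order `n` puts on the point count. -/
def fejerSum (t : ℝ) (n : ℕ) : ℝ := ∑ j ∈ range n, ∑ k ∈ range j, t ^ (k + 1)

lemma fejerSum_pos {t : ℝ} (ht : 0 < t) {n : ℕ} (hn : 2 ≤ n) : 0 < fejerSum t n :=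
  sum_pos' (fun j _ => sum_nonneg fun k _ => by positivity) ⟨1, mem_range.mpr hn, by simp [ht]⟩

lemma tendsto_fejerSum_div {t : ℝ} (ht0 : 0 ≤ t) (ht1 : t < 1) :
    Tendsto (fun n : ℕ => fejerSum t n / n) atTop (𝓝 (t * (1 - t)⁻¹)) := by
  have hpartial :
      Tendsto (fun j : ℕ => ∑ k ∈ range j, t ^ (k + 1)) atTop (𝓝 (t * (1 - t)⁻¹)) := by
    simpa only [pow_succ', ← mul_sum] using
      (hasSum_geometric_of_lt_one ht0 ht1).tendsto_sum_nat.const_mul t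
  simpa only [fejerSum, div_eq_inv_mul] using hpartial.cesaro

lemma tendsto_natCast_div_fejerSum_inv {s : ℝ} (hs : 1 < s) :
    Tendsto (fun n : ℕ => n / fejerSum s⁻¹ n) atTop (𝓝 (s - 1)) := by
  have hs0 : 0 < s := one_pos.trans hs
  have ht1 : s⁻¹ < 1 := inv_lt_one_of_one_lt₀ hs
  have hlim := (tendsto_fejerSum_div (inv_nonneg.mpr hs0.le) ht1).inv₀
    (by have := inv_pos.mpr hs0; have : 0 < 1 - s⁻¹ := sub_pos.mpr ht1; positivity)
  convert hlim using 1
  · simp only [inv_div]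
  · field_simp

lemma limsup_div_le_of_mul_le {ι : Type*} {l : Filter ι} [l.NeBot] {x y : ι → ℝ} {a b c : ℝ}
    (hx : ∀ i, 0 ≤ x i) (hy : Tendsto y l atTop) (ha : 0 < a)
    (h : ∀ i, x i * a ≤ y i * c + b) :
    limsup (fun i => x i / y i) l ≤ c / a := by
  have hlim : Tendsto (fun i => c / a + b / a / y i) l (𝓝 (c / a)) := by
    simpa using tendsto_const_nhds.add (tendsto_const_nhds.div_atTop hy)
  have hle : ∀ᶠ i in l, x i / y i ≤ c / a + b / a / y i := by
    filter_upwards [hy.eventually_gt_atTop 0] with i hi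
    have hrhs : (c / a + b / a / y i) * y i = (y i * c + b) / a := by field_simp
    rw [div_le_iff₀ hi, hrhs, le_div_iff₀ ha]
    exact h i
  have hnonneg : ∀ᶠ i in l, 0 ≤ x i / y i := by
    filter_upwards [hy.eventually_gt_atTop 0] with i hi
    exact div_nonneg (hx i) hi.le
  calc limsup (fun i => x i / y i) l ≤ limsup (fun i => c / a + b / a / y i) l :=
        limsup_le_limsup hle (isCoboundedUnder_le_of_eventually_le l hnonneg)
          hlim.isBoundedUnder_le
    _ = c / a := hlim.limsup_eq

namespace WeilCurveData

variable {q : ℕ} (W : WeilCurveData q)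

lemma N_one_le_N {k : ℕ} (hk : 0 < k) : W.N 1 ≤ W.N k := by
  rw [W.hdiv 1 one_pos, W.hdiv k hk, Nat.divisors_one, sum_singleton]
  exact single_le_sum (f := fun d => d * W.a d) (fun _ _ => Nat.zero_le _)
    (Nat.one_mem_divisors.mpr hk.ne')

lemma sum_re_pow {k : ℕ} (hk : 0 < k) : ∑ i, (W.α i ^ k).re = (q : ℝ) ^ k + 1 - W.N k := by
  have := congrArg Complex.re (W.hN k hk)
  simp only [Complex.sub_re, Complex.add_re, Complex.re_sum, Complex.one_re,
    ← Complex.ofReal_natCast, ← Complex.ofReal_pow, Complex.ofReal_re] at this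
  linarith

lemma norm_α_div_sqrt_eq_one (hq : 0 < q) (i : Fin (2 * W.g)) : ‖W.α i / √q‖ = 1 := by
  have : 0 < √q := Real.sqrt_pos.mpr (by exact_mod_cast hq)
  rw [norm_div, W.habs, Complex.norm_real, Real.norm_of_nonneg this.le, div_self this.ne']

lemma sum_re_div_sqrt_pow_le (hq : 0 < q) (k : ℕ) :
    ∑ i, ((W.α i / √q) ^ (k + 1)).re ≤
      √q ^ (k + 1) + (√q)⁻¹ ^ (k + 1) - W.N 1 * (√q)⁻¹ ^ (k + 1) := by
  have hs : 0 < √q := Real.sqrt_pos.mpr (by exact_mod_cast hq)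
  have hq_mul : (q : ℝ) ^ (k + 1) * (√q)⁻¹ ^ (k + 1) = √q ^ (k + 1) := by
    rw [← mul_pow, ← div_eq_mul_inv, Real.div_sqrt]
  have hN : (W.N 1 : ℝ) ≤ W.N (k + 1) := by exact_mod_cast W.N_one_le_N (k := k + 1) k.succ_pos
  have hre : ∀ i, ((W.α i / √q) ^ (k + 1)).re = (W.α i ^ (k + 1)).re * (√q)⁻¹ ^ (k + 1) := by
    intro i
    rw [div_eq_mul_inv, mul_pow, ← Complex.ofReal_inv, ← Complex.ofReal_pow, Complex.re_mul_ofReal]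
  simp only [hre, ← sum_mul, W.sum_re_pow (k := k + 1) k.succ_pos]
  nlinarith [pow_pos (inv_pos.mpr hs) (k + 1)]

lemma N_one_mul_fejerSum_le (hq : 0 < q) (n : ℕ) :
    W.N 1 * fejerSum (√q)⁻¹ n ≤ W.g * n + (fejerSum √q n + fejerSum (√q)⁻¹ n) := by
  have hnonneg : 0 ≤ ∑ i, Complex.normSq (∑ r ∈ range n, (W.α i / √q) ^ r) :=
    sum_nonneg fun i _ => Complex.normSq_nonneg _
  simp only [Complex.normSq_geom_sum_of_norm_eq_one (W.norm_α_div_sqrt_eq_one hq _),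
    sum_add_distrib, sum_const, card_univ, Fintype.card_fin, ← mul_sum] at hnonneg
  have hbound : ∑ j ∈ range n, ∑ i, ∑ k ∈ range j, ((W.α i / √q) ^ (k + 1)).re ≤
      fejerSum √q n + fejerSum (√q)⁻¹ n - W.N 1 * fejerSum (√q)⁻¹ n := by
    simp only [fejerSum, mul_sum, ← sum_add_distrib, ← sum_sub_distrib]
    refine sum_le_sum fun j _ => ?_
    rw [sum_comm]
    exact sum_le_sum fun k _ => W.sum_re_div_sqrt_pow_le hq k
  rw [sum_comm, nsmul_eq_mul] at hnonneg
  push_cast at hnonneg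
  linarith

end WeilCurveData

/-- **The Drinfeld–Vladut bound** `A(q) ≤ √q − 1`: for every sequence of (smooth projective
absolutely irreducible) curves over `F_q` whose genera tend to infinity, the limsup of
(number of `F_q`-rational points)/(genus) is at most `√q − 1`; equivalently,
`A(q) = limsup_{g → ∞} N_q(g)/g ≤ √q − 1`. -/
theorem drinfeld_vladut_bound (p n q : ℕ) (hp : p.Prime) (hn : 0 < n) (hq : q = p ^ n)
    (C : ℕ → WeilCurveData q)
    (hg : Tendsto (fun i => (C i).g) atTop atTop) :
    limsup (fun i => ((C i).N 1 : ℝ) / ((C i).g : ℝ)) atTop ≤ Real.sqrt q - 1 := by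
  have hq1 : 1 < q := hq ▸ Nat.one_lt_pow hn.ne' hp.one_lt
  have hs : 1 < √q := by simpa using Real.sqrt_lt_sqrt zero_le_one (Nat.one_lt_cast.mpr hq1)
  refine ge_of_tendsto (tendsto_natCast_div_fejerSum_inv hs) ?_
  filter_upwards [eventually_ge_atTop 2] with m hm
  exact limsup_div_le_of_mul_le (fun i => Nat.cast_nonneg _)
    (tendsto_natCast_atTop_atTop.comp hg) (fejerSum_pos (inv_pos.mpr (one_pos.trans hs)) hm)
    fun i => (C i).N_one_mul_fejerSum_le (one_pos.trans hq1) m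
end

section
/- If a tower F = (F_n) over F_q has finite ramification locus V(F) and all ramification is b-bounded (i.e., d(Q|P) ≤ b·e(Q|P) for every n, every place P of F_0 and every place Q of F_n over P), then 2g(F_n) − 2 ≤ (2g(F_0) − 2 + b·∑_{P∈V(F)} deg P)·[F_n : F_0] for all n; hence lim_{n→∞} g(F_n)/[F_n:F_0] < ∞. -/
/-!
Since `deg Q = f(Q|P) · deg P`, the `b`-bounded ramification turns the contribution of a fibre
to the Riemann–Hurwitz sum into at most `b · deg P · ∑_{Q|P} e(Q|P) f(Q|P)`, which is
`b · deg P · [F_n : F_0]` by the fundamental identity. Summing over the finite locus `V` gives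
the linear bound, and dividing by `[F_n : F_0] ≥ 1` bounds `g(F_n)/[F_n : F_0]` by `C/2 + 1`.
-/

open Finset

theorem sum_different_mul_deg_le {ι : Type*} (s : Finset ι) (d e f deg : ι → ℕ) (c N : ℕ)
    (b : ℝ) (hdeg : ∀ Q ∈ s, deg Q = f Q * c) (hbound : ∀ Q ∈ s, (d Q : ℝ) ≤ b * e Q)
    (hfund : ∑ Q ∈ s, e Q * f Q = N) :
    ∑ Q ∈ s, (d Q : ℝ) * deg Q ≤ b * c * N := by
  calc ∑ Q ∈ s, (d Q : ℝ) * deg Q ≤ ∑ Q ∈ s, b * c * (e Q * f Q : ℕ) := by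
        refine sum_le_sum fun Q hQ => ?_
        have hfc : (0 : ℝ) ≤ f Q * c := by positivity
        rw [hdeg Q hQ]
        push_cast
        nlinarith [mul_le_mul_of_nonneg_right (hbound Q hQ) hfc]
    _ = b * c * N := by rw [← mul_sum, ← hfund, Nat.cast_sum]

theorem bddAbove_range_div_of_two_mul_sub_two_le {g : ℕ → ℝ} {D : ℕ → ℕ} {C : ℝ}
    (hD : ∀ n, 0 < D n) (h : ∀ n, 2 * g n - 2 ≤ C * D n) :
    BddAbove (Set.range fun n => g n / D n) := by
  refine ⟨C / 2 + 1, ?_⟩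
  rintro _ ⟨n, rfl⟩
  have hD1 : (1 : ℝ) ≤ D n := by exact_mod_cast hD n
  rw [div_le_iff₀ (by linarith)]
  linarith [h n]

theorem genus_bound_of_bounded_ramification_general
    (Place : ℕ → Type)
    (degP : ∀ {n : ℕ}, Place n → ℕ)
    (toBase : ∀ {n : ℕ}, Place n → Place 0)
    (e d f : ∀ {n : ℕ}, Place n → ℕ)
    (g : ℕ → ℕ) (D : ℕ → ℕ) (hD : ∀ n, 0 < D n)
    (V : Finset (Place 0))
    (hfib : ∀ (n : ℕ) (P : Place 0), {Q : Place n | toBase Q = P}.Finite)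
    (hdegQ : ∀ (n : ℕ) (Q : Place n), degP Q = f Q * degP (toBase Q))
    (hRH : ∀ n : ℕ, 2 * (g n : ℤ) - 2 =
      (2 * (g 0 : ℤ) - 2) * (D n : ℤ) +
        ∑ P ∈ V, ∑ Q ∈ (hfib n P).toFinset, (d Q : ℤ) * (degP Q : ℤ))
    (hfund : ∀ (n : ℕ) (P : Place 0),
      ∑ Q ∈ (hfib n P).toFinset, e Q * f Q = D n)
    (b : ℝ)
    (hbound : ∀ (n : ℕ) (Q : Place n), (d Q : ℝ) ≤ b * (e Q : ℝ)) :
    (∀ n : ℕ, 2 * (g n : ℝ) - 2 ≤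
        (2 * (g 0 : ℝ) - 2 + b * ∑ P ∈ V, (degP P : ℝ)) * (D n : ℝ)) ∧
      BddAbove (Set.range fun n => (g n : ℝ) / (D n : ℝ)) := by
  have hgenus : ∀ n : ℕ, 2 * (g n : ℝ) - 2 ≤
      (2 * (g 0 : ℝ) - 2 + b * ∑ P ∈ V, (degP P : ℝ)) * (D n : ℝ) := by
    intro n
    have hRHn := congrArg (Int.cast : ℤ → ℝ) (hRH n)
    push_cast at hRHn
    have hfibre : ∀ P ∈ V, ∑ Q ∈ (hfib n P).toFinset, (d Q : ℝ) * degP Q ≤ b * degP P * D n :=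
      fun P _ => sum_different_mul_deg_le _ d e f degP _ _ b
        (fun Q hQ => by rw [hdegQ, (Set.Finite.mem_toFinset _).1 hQ])
        (fun Q _ => hbound n Q) (hfund n P)
    have hdiff := sum_le_sum hfibre
    rw [← sum_mul, ← mul_sum] at hdiff
    rw [hRHn]
    linarith
  exact ⟨hgenus, bddAbove_range_div_of_two_mul_sub_two_le hD hgenus⟩

/-- **Genus bound for towers with finite ramification locus and `b`-bounded ramification.**
A tower `F = (F_n)` over `F_q` is modelled by: types `Place n` of places of `F_n` with degree
`degP`, restriction `toBase` to `F_0`, ramification index `e`, different exponent `d` and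
residue degree `f` over the base, genera `g n`, and degrees `D n = [F_n : F_0]`.  The
ramification locus `V` is finite (a `Finset`) and contains the base of every place with
nonzero different exponent; the Riemann–Hurwitz formula and the fundamental identity hold.
If all ramification is `b`-bounded, i.e. `d(Q|P) ≤ b·e(Q|P)` throughout the tower, then
`2g(F_n) − 2 ≤ (2g(F_0) − 2 + b·∑_{P ∈ V} deg P)·[F_n : F_0]` for all `n`; hence
`g(F_n)/[F_n : F_0]` stays bounded. -/
theorem genus_bound_of_bounded_ramification
    (Place : ℕ → Type)
    (degP : ∀ {n : ℕ}, Place n → ℕ)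
    (toBase : ∀ {n : ℕ}, Place n → Place 0)
    (e d f : ∀ {n : ℕ}, Place n → ℕ)
    (g : ℕ → ℕ) (D : ℕ → ℕ) (hD : ∀ n, 0 < D n)
    (V : Finset (Place 0))
    (hfib : ∀ (n : ℕ) (P : Place 0), {Q : Place n | toBase Q = P}.Finite)
    (hram : ∀ (n : ℕ) (Q : Place n), toBase Q ∉ V → d Q = 0)
    (hdegQ : ∀ (n : ℕ) (Q : Place n), degP Q = f Q * degP (toBase Q))
    (hRH : ∀ n : ℕ, 2 * (g n : ℤ) - 2 =
      (2 * (g 0 : ℤ) - 2) * (D n : ℤ) +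
        ∑ P ∈ V, ∑ Q ∈ (hfib n P).toFinset, (d Q : ℤ) * (degP Q : ℤ))
    (hfund : ∀ (n : ℕ) (P : Place 0),
      ∑ Q ∈ (hfib n P).toFinset, e Q * f Q = D n)
    (b : ℝ) (hb : 0 ≤ b)
    (hbound : ∀ (n : ℕ) (Q : Place n), (d Q : ℝ) ≤ b * (e Q : ℝ)) :
    (∀ n : ℕ, 2 * (g n : ℝ) - 2 ≤
        (2 * (g 0 : ℝ) - 2 + b * ∑ P ∈ V, (degP P : ℝ)) * (D n : ℝ)) ∧
      BddAbove (Set.range fun n => (g n : ℝ) / (D n : ℝ)) :=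
  genus_bound_of_bounded_ramification_general Place degP toBase e d f g D hD V hfib hdegQ hRH hfund
    b hbound
end

section
/- In the setting of the previous lemma (F'/F Galois of degree p² with all p+1 intermediate degree-p extensions having different exponent 2(p−1) at the restrictions of P', and e(P'|P) = p²), the ramification filtration of P'|P satisfies |G_0| = |G_1| = p² and G_2 = {id}; in particular d(P'|P) = 2(p²−1). -/
/-!
Every line `H ≤ (ZMod p)²` has prime order, so `G i ⊓ H` is either `H` or `⊥`, and since the
filtration decreases the relative sum `∑ (|G i ⊓ H| - 1)` equals `(p - 1)` times the number of
indices `i` with `H ≤ G i`. That it equals `2(p - 1)` for every line forces each line to lie in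
`G 1` but not in `G 2`; as every nonzero vector spans a line, `G 1 = ⊤` and `G 2 = ⊥`.
The value of the different then comes from the transitivity formula for any one line.
-/

open Finset

lemma ZModModule.card_zmultiples_of_ne_zero {p : ℕ} [Fact p.Prime] {V : Type*} [AddCommGroup V]
    [Module (ZMod p) V] {x : V} (hx : x ≠ 0) : Nat.card (AddSubgroup.zmultiples x) = p := by
  rw [Nat.card_zmultiples]
  exact addOrderOf_eq_prime (ZModModule.char_nsmul_eq_zero p x) hx

namespace AddSubgroup

variable {A : Type*} [AddGroup A]

lemma inf_eq_bot_or_le_of_card_prime (K : AddSubgroup A) {H : AddSubgroup A}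
    (hH : (Nat.card H).Prime) : K ⊓ H = ⊥ ∨ H ≤ K := by
  have : Finite H := Nat.finite_of_card_ne_zero hH.ne_zero
  rcases (Nat.dvd_prime hH).mp (card_dvd_of_le (inf_le_right : K ⊓ H ≤ H)) with h | h
  · exact .inl (card_eq_one.mp h)
  · exact .inr (inf_eq_right.mp (eq_of_le_of_card_ge inf_le_right h.ge))

variable {G : ℕ → AddSubgroup A} (hG : Antitone G) {H : AddSubgroup A}
include hG

lemma sum_card_inf_sub_one_le_of_inf_eq_bot [Finite H] (N : ℕ) {k : ℕ} (hk : G k ⊓ H = ⊥) :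
    ∑ i ∈ range N, (Nat.card ↥(G i ⊓ H) - 1) ≤ k * (Nat.card H - 1) := by
  have hvanish : ∀ i, k ≤ i → Nat.card ↥(G i ⊓ H) - 1 = 0 := fun i hi => by
    have hle := inf_le_inf_right H (hG hi)
    rw [hk, le_bot_iff] at hle
    rw [hle, card_bot]
  calc ∑ i ∈ range N, (Nat.card ↥(G i ⊓ H) - 1)
      = ∑ i ∈ range (min N k), (Nat.card ↥(G i ⊓ H) - 1) :=
        (sum_subset (range_subset_range.mpr (min_le_left N k)) fun i _ hi =>
          hvanish i (by simp_all)).symm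
    _ ≤ min N k • (Nat.card H - 1) := by
        simpa using sum_le_card_nsmul (range (min N k)) _ _ fun i _ =>
          Nat.sub_le_sub_right (card_le_of_le (inf_le_right : G i ⊓ H ≤ H)) 1
    _ ≤ k * (Nat.card H - 1) := Nat.mul_le_mul_right _ (min_le_right N k)

lemma succ_mul_le_sum_card_inf_sub_one {N : ℕ} (hN : G N = ⊥) (hH : H ≠ ⊥) {k : ℕ}
    (hk : H ≤ G k) : (k + 1) * (Nat.card H - 1) ≤ ∑ i ∈ range N, (Nat.card ↥(G i ⊓ H) - 1) := by
  have hkN : k < N := by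
    by_contra! hNk
    exact hH (le_bot_iff.mp (hN ▸ hk.trans (hG hNk)))
  calc (k + 1) * (Nat.card H - 1)
      = ∑ i ∈ range (k + 1), (Nat.card ↥(G i ⊓ H) - 1) := by
        rw [sum_congr rfl fun i hi => by
          rw [inf_eq_right.mpr (hk.trans (hG (Nat.lt_succ_iff.mp (mem_range.mp hi))))]]
        simp
    _ ≤ ∑ i ∈ range N, (Nat.card ↥(G i ⊓ H) - 1) :=
        sum_le_sum_of_subset (range_subset_range.mpr hkN)

lemma le_one_and_not_le_two_of_sum_card_inf_sub_one_eq {N : ℕ} (hN : G N = ⊥)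
    (hH : (Nat.card H).Prime)
    (hsum : ∑ i ∈ range N, (Nat.card ↥(G i ⊓ H) - 1) = 2 * (Nat.card H - 1)) :
    H ≤ G 1 ∧ ¬ H ≤ G 2 := by
  have : Finite H := Nat.finite_of_card_ne_zero hH.ne_zero
  have hpos : 0 < Nat.card H - 1 := Nat.sub_pos_of_lt hH.one_lt
  refine ⟨((G 1).inf_eq_bot_or_le_of_card_prime hH).resolve_left fun h1 => ?_, fun h2 => ?_⟩
  · have := sum_card_inf_sub_one_le_of_inf_eq_bot hG N h1
    omega
  · have hne : H ≠ ⊥ := fun h => hH.one_lt.ne' (by rw [h, card_bot])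
    have := succ_mul_le_sum_card_inf_sub_one hG hN hne h2
    omega

end AddSubgroup

theorem ramification_filtration_of_diamond_general (p : ℕ) (hp : p.Prime)
    (G : ℕ → AddSubgroup (ZMod p × ZMod p))
    (hanti : Antitone G)
    (hG0 : G 0 = ⊤)
    (NN : ℕ) (hNN : G NN = ⊥)
    (dtot : ℕ)
    (hrelative : ∀ H : AddSubgroup (ZMod p × ZMod p), Nat.card H = p →
      ∑ i ∈ Finset.range NN, (Nat.card ↥(G i ⊓ H) - 1) = 2 * (p - 1))
    (hintermediate : ∀ H : AddSubgroup (ZMod p × ZMod p), Nat.card H = p →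
      dtot = Nat.card ↥(G 0 ⊓ H) * (2 * (p - 1)) +
        ∑ i ∈ Finset.range NN, (Nat.card ↥(G i ⊓ H) - 1)) :
    Nat.card (G 0) = p ^ 2 ∧ Nat.card (G 1) = p ^ 2 ∧ G 2 = ⊥ ∧
      dtot = 2 * (p ^ 2 - 1) := by
  have := Fact.mk hp
  have hline : ∀ H : AddSubgroup (ZMod p × ZMod p), Nat.card H = p → H ≤ G 1 ∧ ¬ H ≤ G 2 :=
    fun H hH => AddSubgroup.le_one_and_not_le_two_of_sum_card_inf_sub_one_eq hanti hNN
      (hH.symm ▸ hp) (by rw [hH]; exact hrelative H hH)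
  have hG1 : G 1 = ⊤ := eq_top_iff.mpr fun x _ => by
    rcases eq_or_ne x 0 with rfl | hx
    · exact zero_mem _
    · exact (hline _ (ZModModule.card_zmultiples_of_ne_zero hx)).1
        (AddSubgroup.mem_zmultiples x)
  have hG2 : G 2 = ⊥ := (AddSubgroup.eq_bot_iff_forall _).mpr fun x hx => by
    by_contra hx0
    exact (hline _ (ZModModule.card_zmultiples_of_ne_zero hx0)).2
      (AddSubgroup.zmultiples_le.mpr hx)
  have hcard : Nat.card (⊤ : AddSubgroup (ZMod p × ZMod p)) = p ^ 2 := by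
    rw [AddSubgroup.card_top, Nat.card_prod, Nat.card_zmod, sq]
  refine ⟨hG0 ▸ hcard, hG1 ▸ hcard, hG2, ?_⟩
  have hL := ZModModule.card_zmultiples_of_ne_zero (p := p) (x := ((1, 0) : ZMod p × ZMod p))
    (by simp)
  rw [hintermediate _ hL, hrelative _ hL, hG0, top_inf_eq, hL]
  zify [hp.one_le, Nat.one_le_pow 2 p hp.pos]
  ring

/-- **Ramification filtration in the Artin–Schreier diamond.**
`F'/F` is Galois with group `G = Z/pZ × Z/pZ` and `P'` is a place of `F'` totally ramified
over the place `P` of `F` (so `e(P'|P) = p²`, i.e. `G₀ = G`).  The ramification filtration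
`G i` of `P'|P` (in lower numbering) is a decreasing chain of subgroups, eventually trivial,
and Hilbert's different formula gives `d(P'|P) = ∑_{i ≥ 0} (|G i| − 1)`; for a nontrivial
intermediate field `E = Fix(H)` (with `H` of order `p`), the ramification groups of `P'|Q`
are `G i ⊓ H`, and transitivity of the different reads
`d(P'|P) = e(P'|Q)·d(Q|P) + d(P'|Q)`.  If every one of the `p+1` intermediate degree-`p`
extensions has `d(Q|P) = 2(p−1)` and `d(P'|Q) = 2(p−1)`, then `|G 0| = |G 1| = p²`,
`G 2 = ⊥`, and `d(P'|P) = 2(p² − 1)`. -/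
theorem ramification_filtration_of_diamond (p : ℕ) (hp : p.Prime)
    (G : ℕ → AddSubgroup (ZMod p × ZMod p))
    (hanti : Antitone G)
    (hG0 : G 0 = ⊤)
    (NN : ℕ) (hNN : G NN = ⊥)
    (dtot : ℕ)
    (hHilbert : dtot = ∑ i ∈ Finset.range NN, (Nat.card (G i) - 1))
    (hrelative : ∀ H : AddSubgroup (ZMod p × ZMod p), Nat.card H = p →
      ∑ i ∈ Finset.range NN, (Nat.card ↥(G i ⊓ H) - 1) = 2 * (p - 1))
    (hintermediate : ∀ H : AddSubgroup (ZMod p × ZMod p), Nat.card H = p →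
      dtot = Nat.card ↥(G 0 ⊓ H) * (2 * (p - 1)) +
        ∑ i ∈ Finset.range NN, (Nat.card ↥(G i ⊓ H) - 1)) :
    Nat.card (G 0) = p ^ 2 ∧ Nat.card (G 1) = p ^ 2 ∧ G 2 = ⊥ ∧
      dtot = 2 * (p ^ 2 - 1) :=
  ramification_filtration_of_diamond_general p hp G hanti hG0 NN hNN dtot hrelative hintermediate
end

section
/- In the first Garcia–Stichtenoth tower E over F_{q²}, if z_i := x_{i−1}x_i satisfies z_i^q + z_i = x_{i−1}^{q+1} for all i ≥ 1 and x_i^{q+1} = z_{i+1}^q + z_{i+1}, then z_{i+1}^q + z_{i+1} = z_i^q/(z_i^{q−1} + 1) for all i ≥ 1; i.e., the variables z_i satisfy the recursion of the second Garcia–Stichtenoth tower. -/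
/-! Since `x_i = z_i / x_{i-1}`, we get `x_i^{q+1} = z_i^{q+1} / x_{i-1}^{q+1} = z_i^{q+1} / (z_i^q + z_i)`,
and cancelling one factor `z_i` gives the recursion of the second tower. -/

/-- Unconditional thanks to `x / 0 = 0`: if `z = 0` or `z ^ (q - 1) + 1 = 0`, both sides vanish. -/
theorem pow_succ_div_pow_add_self {K : Type*} [Field K] (z : K) {q : ℕ} (hq : q ≠ 0) :
    z ^ (q + 1) / (z ^ q + z) = z ^ q / (z ^ (q - 1) + 1) := by
  obtain ⟨n, rfl⟩ := Nat.exists_eq_succ_of_ne_zero hq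
  rcases eq_or_ne z 0 with rfl | hz
  · simp
  calc z ^ (n + 1 + 1) / (z ^ (n + 1) + z) = z * z ^ (n + 1) / (z * (z ^ n + 1)) := by ring_nf
    _ = z ^ (n + 1) / (z ^ n + 1) := mul_div_mul_left _ _ hz

theorem first_to_second_gs_tower_general (q : ℕ) (hq : 2 ≤ q)
    (K : Type*) [Field K]
    (xim xi zi zi1 : K)
    (hz : zi = xim * xi)
    (hxim : xim ≠ 0)
    (h1 : zi ^ q + zi = xim ^ (q + 1))
    (h2 : zi1 ^ q + zi1 = xi ^ (q + 1)) :
    zi1 ^ q + zi1 = zi ^ q / (zi ^ (q - 1) + 1) := by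
  have hxi : xi = zi / xim := by rw [hz, mul_div_cancel_left₀ _ hxim]
  calc zi1 ^ q + zi1 = xi ^ (q + 1) := h2
    _ = zi ^ (q + 1) / (zi ^ q + zi) := by rw [hxi, div_pow, h1]
    _ = zi ^ q / (zi ^ (q - 1) + 1) := pow_succ_div_pow_add_self zi (by omega)

/-- **From the first to the second Garcia–Stichtenoth tower.**
In the first Garcia–Stichtenoth tower over `F_{q²}`, set `z_i := x_{i−1}·x_i`.  If
`z_i^q + z_i = x_{i−1}^{q+1}` and `z_{i+1}^q + z_{i+1} = x_i^{q+1}` (with the relevant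
denominators nonzero), then `z_{i+1}^q + z_{i+1} = z_i^q/(z_i^{q−1} + 1)`, i.e. the
variables `z_i` satisfy the recursion of the second Garcia–Stichtenoth tower. -/
theorem first_to_second_gs_tower (q : ℕ) (hq : 2 ≤ q)
    (K : Type*) [Field K]
    (xim xi zi zi1 : K)
    (hz : zi = xim * xi)
    (hxim : xim ≠ 0) (hzi : zi ≠ 0) (hden : zi ^ (q - 1) + 1 ≠ 0)
    (h1 : zi ^ q + zi = xim ^ (q + 1))
    (h2 : zi1 ^ q + zi1 = xi ^ (q + 1)) :
    zi1 ^ q + zi1 = zi ^ q / (zi ^ (q - 1) + 1) :=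
  first_to_second_gs_tower_general q hq K xim xi zi zi1 hz hxim h1 h2
end

section
/- Optimizing over coprime positive integers j, k with j + k = m, the quantity 2·(1/(q^j−1) + 1/(q^k−1))^{−1} is maximized at (j,k) = (⌈m/2⌉, ⌊m/2⌋) when gcd(⌈m/2⌉,⌊m/2⌋)=1; in particular for odd m, A(p^m) ≥ 2·(1/(p^{⌊m/2⌋}−1) + 1/(p^{⌈m/2⌉}−1))^{−1}, and for m = 3 this equals Zink's bound 2(p²−1)/(p+2). -/
/-!
For a fixed product `P = x * y` of two numbers `x, y > 1`,
`1/(x - 1) + 1/(y - 1) = (s - 2)/(P + 1 - s)` increases with `s = x + y`, and `s` grows as the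
pair `x ≤ y` spreads apart. With `x = q^j`, `y = q^k` the product `q^m` is fixed by `j + k = m`,
so the BBGS bound is largest for the most balanced split `(⌈m/2⌉, ⌊m/2⌋)`, which is admissible
exactly when these two are coprime.
-/

lemma add_le_add_of_mul_eq {x y u v : ℝ} (hx : 0 < x) (hxu : x ≤ u) (hxv : x ≤ v)
    (hP : x * y = u * v) : u + v ≤ x + y := by
  have hspread : 0 ≤ (u - x) * (v - x) := mul_nonneg (sub_nonneg.2 hxu) (sub_nonneg.2 hxv)
  nlinarith

lemma one_div_sub_one_add_le_of_mul_eq {x y u v : ℝ} (hx : 1 < x) (hxu : x ≤ u) (hxv : x ≤ v)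
    (hP : x * y = u * v) :
    1 / (u - 1) + 1 / (v - 1) ≤ 1 / (x - 1) + 1 / (y - 1) := by
  have hsum := add_le_add_of_mul_eq (by linarith) hxu hxv hP
  have hy : v ≤ y := by nlinarith
  have hx1 : 0 < x - 1 := by linarith
  have hu1 : 0 < u - 1 := by linarith
  have hv1 : 0 < v - 1 := by linarith
  have hy1 : 0 < y - 1 := by linarith
  rw [div_add_div _ _ hu1.ne' hv1.ne', div_add_div _ _ hx1.ne' hy1.ne',
    div_le_div_iff₀ (by positivity) (by positivity)]
  nlinarith [mul_nonneg (sub_nonneg.2 hsum) hx1.le, mul_pos hx1 hy1, mul_pos hu1 hv1]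

noncomputable def bbgsBound (q : ℝ) (j k : ℕ) : ℝ :=
  2 * (1 / (q ^ j - 1) + 1 / (q ^ k - 1))⁻¹

lemma bbgsBound_comm (q : ℝ) (j k : ℕ) : bbgsBound q j k = bbgsBound q k j := by
  rw [bbgsBound, bbgsBound, add_comm]

lemma bbgsBound_le_bbgsBound {q : ℝ} (hq : 1 < q) {j k j' k' : ℕ} (hj : 0 < j)
    (hjj' : j ≤ j') (hjk' : j ≤ k') (hsum : j + k = j' + k') :
    bbgsBound q j k ≤ bbgsBound q j' k' := by
  have hpow : ∀ {a b : ℕ}, a ≤ b → q ^ a ≤ q ^ b := fun h => pow_le_pow_right₀ hq.le h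
  have hqj : 1 < q ^ j := one_lt_pow₀ hq hj.ne'
  have hrecip := one_div_sub_one_add_le_of_mul_eq hqj (hpow hjj') (hpow hjk')
    (by rw [← pow_add, ← pow_add, hsum])
  have hpos : 0 < 1 / (q ^ j' - 1) + 1 / (q ^ k' - 1) := by
    have := hqj.trans_le (hpow hjj')
    have := hqj.trans_le (hpow hjk')
    positivity
  unfold bbgsBound
  gcongr

lemma bbgsBound_le_balanced {q : ℝ} (hq : 1 < q) {j k m : ℕ} (hj : 0 < j) (hk : 0 < k)
    (hm : j + k = m) : bbgsBound q j k ≤ bbgsBound q ((m + 1) / 2) (m / 2) := by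
  rcases le_total j k with hjk | hkj
  · exact bbgsBound_le_bbgsBound hq hj (by omega) (by omega) (by omega)
  · rw [bbgsBound_comm q j k]
    exact bbgsBound_le_bbgsBound hq hk (by omega) (by omega) (by omega)

lemma bbgsBound_one_two {q : ℝ} (hq : 1 < q) :
    bbgsBound q 1 2 = 2 * (q ^ 2 - 1) / (q + 2) := by
  have hq1 : q - 1 ≠ 0 := by linarith
  have hq2 : q ^ 2 - 1 ≠ 0 := by nlinarith
  have hsum : 1 / (q ^ 1 - 1) + 1 / (q ^ 2 - 1) = (q + 2) / (q ^ 2 - 1) := by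
    field_simp
    ring
  rw [bbgsBound, hsum, inv_div, mul_div_assoc]

theorem bbgs_optimization_general (p m : ℕ) (hp : p.Prime) (h3 : 3 ≤ m)
    (hcop : Nat.gcd ((m + 1) / 2) (m / 2) = 1)
    (A : ℝ)
    (hBBGS : ∀ j k : ℕ, 0 < j → 0 < k → Nat.Coprime j k → j + k = m →
      2 * (1 / ((p : ℝ) ^ j - 1) + 1 / ((p : ℝ) ^ k - 1))⁻¹ ≤ A) :
    (∀ j k : ℕ, 0 < j → 0 < k → Nat.Coprime j k → j + k = m →
      2 * (1 / ((p : ℝ) ^ j - 1) + 1 / ((p : ℝ) ^ k - 1))⁻¹ ≤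
        2 * (1 / ((p : ℝ) ^ ((m + 1) / 2) - 1) + 1 / ((p : ℝ) ^ (m / 2) - 1))⁻¹) ∧
    2 * (1 / ((p : ℝ) ^ (m / 2) - 1) + 1 / ((p : ℝ) ^ ((m + 1) / 2) - 1))⁻¹ ≤ A ∧
    (m = 3 →
      2 * (1 / ((p : ℝ) ^ (1 : ℕ) - 1) + 1 / ((p : ℝ) ^ (2 : ℕ) - 1))⁻¹ =
        2 * ((p : ℝ) ^ (2 : ℕ) - 1) / ((p : ℝ) + 2)) := by
  have hp1 : (1 : ℝ) < p := by exact_mod_cast hp.one_lt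
  refine ⟨fun j k hj hk _ hjk => bbgsBound_le_balanced hp1 hj hk hjk, ?_,
    fun _ => bbgsBound_one_two hp1⟩
  have hbalanced := hBBGS ((m + 1) / 2) (m / 2) (by omega) (by omega) hcop (by omega)
  rwa [← bbgsBound, bbgsBound_comm] at hbalanced

/-- **Optimizing the BBGS bound.**
For coprime positive integers `j`, `k` with `j + k = m`, the quantity
`2·(1/(p^j − 1) + 1/(p^k − 1))⁻¹` is maximized at `(j, k) = (⌈m/2⌉, ⌊m/2⌋)` when
`gcd(⌈m/2⌉, ⌊m/2⌋) = 1`; in particular, for odd `m`, given the BBGS bound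
`A(p^m) ≥ 2·(1/(p^j − 1) + 1/(p^k − 1))⁻¹` for all such `(j, k)`, one gets
`A(p^m) ≥ 2·(1/(p^{⌊m/2⌋} − 1) + 1/(p^{⌈m/2⌉} − 1))⁻¹`, and for `m = 3` this equals
Zink's bound `2(p² − 1)/(p + 2)`.  (In ℕ-division, `⌊m/2⌋ = m/2` and `⌈m/2⌉ = (m+1)/2`.) -/
theorem bbgs_optimization (p m : ℕ) (hp : p.Prime) (hm : Odd m) (h3 : 3 ≤ m)
    (hcop : Nat.gcd ((m + 1) / 2) (m / 2) = 1)
    (A : ℝ)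
    (hBBGS : ∀ j k : ℕ, 0 < j → 0 < k → Nat.Coprime j k → j + k = m →
      2 * (1 / ((p : ℝ) ^ j - 1) + 1 / ((p : ℝ) ^ k - 1))⁻¹ ≤ A) :
    (∀ j k : ℕ, 0 < j → 0 < k → Nat.Coprime j k → j + k = m →
      2 * (1 / ((p : ℝ) ^ j - 1) + 1 / ((p : ℝ) ^ k - 1))⁻¹ ≤
        2 * (1 / ((p : ℝ) ^ ((m + 1) / 2) - 1) + 1 / ((p : ℝ) ^ (m / 2) - 1))⁻¹) ∧
    2 * (1 / ((p : ℝ) ^ (m / 2) - 1) + 1 / ((p : ℝ) ^ ((m + 1) / 2) - 1))⁻¹ ≤ A ∧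
    (m = 3 →
      2 * (1 / ((p : ℝ) ^ (1 : ℕ) - 1) + 1 / ((p : ℝ) ^ (2 : ℕ) - 1))⁻¹ =
        2 * ((p : ℝ) ^ (2 : ℕ) - 1) / ((p : ℝ) + 2)) :=
  bbgs_optimization_general p m hp h3 hcop A hBBGS
end

section
/- For the BBGS tower recursion (x_i^{q^m} − x_i)/x_i^{q^j} = (x_{i−1}^{q^m} − x_{i−1})/x_{i−1}^{q^m − q^k + 1} with j+k=m, the differential form ω := ((x_i^{q^m} − x_i)^{q^j + q^k − 2} / x_i^{(q^m−1)q^j}) (dx_i)^{⊗(q^m − q^j − q^k + 1)} is invariant: it equals the same expression with x_i replaced by x_{i−1}, given that −x_i^{−q^j} dx_i = x_{i−1}^{q^k − 2} dx_{i−1}. -/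
/-!
Put `a = q^j`, `b = q^k`, so that `q^m = ab` and the tensor exponent is `(a-1)(b-1)`.
The differential relation gives `dx_i = -x_i^a x_{i-1}^{b-2} dx_{i-1}`, and the sign dies in the
tensor power because `(-1)^(q-1) = 1` in characteristic `p`. Writing `t` for the common value of
the two sides of the recursion, `x_i^{ab} - x_i = t x_i^a` and
`x_{i-1}^{ab} - x_{i-1} = t x_{i-1}^{ab-b+1}`, and both coefficients of `dx_{i-1}^{⊗(a-1)(b-1)}`
reduce to `t^{a+b-2} x_{i-1}^{(b-2)(a-1)(b-1)}`.
-/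

theorem Nat.mul_sub_sub_add_one_eq {a b : ℕ} (ha : 2 ≤ a) (hb : 2 ≤ b) :
    a * b - a - b + 1 = (a - 1) * (b - 1) := by
  obtain ⟨a, rfl⟩ := Nat.exists_eq_add_of_le' (show 1 ≤ a by omega)
  obtain ⟨b, rfl⟩ := Nat.exists_eq_add_of_le' (show 1 ≤ b by omega)
  have : 1 ≤ a * b := Nat.mul_pos (by omega) (by omega)
  rw [Nat.add_sub_cancel, Nat.add_sub_cancel,
    show (a + 1) * (b + 1) = a * b + (a + 1) + b by ring]
  omega

theorem neg_one_pow_pow_sub_one_mul {R : Type*} [Ring R] (p : ℕ) [ExpChar R p] (n c : ℕ) :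
    (-1 : R) ^ ((p ^ n - 1) * c) = 1 := by
  have hpos : 1 ≤ p ^ n := Nat.one_le_pow _ _ (expChar_pos R p)
  suffices h : (-1 : R) ^ (p ^ n - 1) = 1 by rw [pow_mul, h, one_pow]
  have h := neg_one_pow_expChar_pow R p n
  rw [← Nat.sub_add_cancel hpos, pow_succ, mul_neg_one, neg_inj] at h
  exact h

theorem PiTensorProduct.tprod_const_smul {R M : Type*} [CommSemiring R] [AddCommMonoid M]
    [Module R M] (n : ℕ) (c : R) (v : M) :
    tprod R (fun _ : Fin n => c • v) = c ^ n • tprod R fun _ : Fin n => v := by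
  simpa using (tprod R).map_smul_univ (fun _ : Fin n => c) (fun _ => v)

theorem eq_neg_smul_of_neg_inv_smul_eq {K M : Type*} [Field K] [AddCommGroup M]
    [Module K M] {c : K} (hc : c ≠ 0) {v w : M} (h : -c⁻¹ • v = w) : v = -c • w := by
  rw [← h, smul_smul, neg_mul_neg, mul_inv_cancel₀ hc, one_smul]

theorem bbgs_coefficient_eq {K : Type*} [Field K] {x y : K} (hx : x ≠ 0) (hy : y ≠ 0) (t : K)
    {a b : ℕ} (ha : 1 ≤ a) (hb : 2 ≤ b) :
    (t * x ^ a) ^ (a + b - 2) / x ^ ((a * b - 1) * a) *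
        (x ^ a * y ^ (b - 2)) ^ ((a - 1) * (b - 1)) =
      (t * y ^ (a * b - b + 1)) ^ (a + b - 2) / y ^ ((a * b - 1) * a) := by
  have hab : 1 ≤ a * b := Nat.one_le_iff_ne_zero.mpr (by positivity)
  have hbab : b ≤ a * b := Nat.le_mul_of_pos_left b ha
  have hx_exp : a * (a + b - 2) + a * ((a - 1) * (b - 1)) = (a * b - 1) * a := by
    zify [ha, hab, (show 1 ≤ b by omega), (show 2 ≤ a + b by omega)]; ring
  have hy_exp : (b - 2) * ((a - 1) * (b - 1)) + (a * b - 1) * a =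
      (a * b - b + 1) * (a + b - 2) := by
    zify [ha, hb, hab, hbab, (show 1 ≤ b by omega), (show 2 ≤ a + b by omega)]; ring
  calc _ = t ^ (a + b - 2) * y ^ ((b - 2) * ((a - 1) * (b - 1))) * x ^ ((a * b - 1) * a)
          / x ^ ((a * b - 1) * a) := by
        rw [← hx_exp, pow_add]; ring
    _ = t ^ (a + b - 2) * y ^ ((b - 2) * ((a - 1) * (b - 1))) * y ^ ((a * b - 1) * a)
          / y ^ ((a * b - 1) * a) := by
        rw [mul_div_cancel_right₀ _ (pow_ne_zero _ hx), mul_div_cancel_right₀ _ (pow_ne_zero _ hy)]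
    _ = _ := by rw [mul_assoc, ← pow_add, hy_exp]; ring

/-- **Invariance of the BBGS differential.**
Work in a function field of characteristic `p` (with `q` a power of `p`, `m = j + k`)
containing elements `x_{i−1} = xim` and `x_i = xi` satisfying the BBGS recursion
`(x_i^{q^m} − x_i)/x_i^{q^j} = (x_{i−1}^{q^m} − x_{i−1})/x_{i−1}^{q^m − q^k + 1}`.
Differentials are modelled by a `K`-module `Ω` containing `dx_i` and `dx_{i−1}`;
differentiating the recursion gives `−x_i^{−q^j}·dx_i = x_{i−1}^{q^k − 2}·dx_{i−1}`.
Then the `(q^m − q^j − q^k + 1)`-fold tensor power differential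
`ω = ((x_i^{q^m} − x_i)^{q^j + q^k − 2}/x_i^{(q^m − 1)q^j})·(dx_i)^{⊗(q^m − q^j − q^k + 1)}`
is invariant: it equals the same expression with `x_i` replaced by `x_{i−1}`. -/
theorem bbgs_invariant_differential (p s q m j k : ℕ) (hp : p.Prime) (hs : 0 < s)
    (hq : q = p ^ s) (hj : 0 < j) (hk : 0 < k) (hm : m = j + k)
    (K : Type*) [Field K] [CharP K p]
    (Ω : Type*) [AddCommGroup Ω] [Module K Ω]
    (xim xi : K) (hxim : xim ≠ 0) (hxi : xi ≠ 0)
    (dxim dxi : Ω)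
    (hrel : (xi ^ q ^ m - xi) / xi ^ q ^ j =
      (xim ^ q ^ m - xim) / xim ^ (q ^ m - q ^ k + 1))
    (hdiff : -((xi ^ q ^ j)⁻¹) • dxi = xim ^ (q ^ k - 2) • dxim) :
    ((xi ^ q ^ m - xi) ^ (q ^ j + q ^ k - 2) / xi ^ ((q ^ m - 1) * q ^ j)) •
        (PiTensorProduct.tprod K fun _ : Fin (q ^ m - q ^ j - q ^ k + 1) => dxi) =
      ((xim ^ q ^ m - xim) ^ (q ^ j + q ^ k - 2) / xim ^ ((q ^ m - 1) * q ^ j)) •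
        (PiTensorProduct.tprod K fun _ : Fin (q ^ m - q ^ j - q ^ k + 1) => dxim) := by
  have := Fact.mk hp
  have hq2 : 2 ≤ q := hq ▸ hp.two_le.trans (Nat.le_self_pow hs.ne' p)
  have ha : 2 ≤ q ^ j := hq2.trans (Nat.le_self_pow hj.ne' q)
  have hb : 2 ≤ q ^ k := hq2.trans (Nat.le_self_pow hk.ne' q)
  have hsign : (-1 : K) ^ ((q ^ j - 1) * (q ^ k - 1)) = 1 := by
    rw [hq, ← pow_mul]; exact neg_one_pow_pow_sub_one_mul p _ _
  have hdxi : dxi = -(xi ^ q ^ j * xim ^ (q ^ k - 2)) • dxim := by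
    rw [eq_neg_smul_of_neg_inv_smul_eq (pow_ne_zero _ hxi) hdiff, smul_smul, neg_mul]
  obtain ⟨t, hX, hU⟩ : ∃ t : K, xi ^ q ^ m - xi = t * xi ^ q ^ j ∧
      xim ^ q ^ m - xim = t * xim ^ (q ^ m - q ^ k + 1) :=
    ⟨_, (div_mul_cancel₀ _ (pow_ne_zero _ hxi)).symm,
      hrel ▸ (div_mul_cancel₀ _ (pow_ne_zero _ hxim)).symm⟩
  rw [hX, hU, hdxi, PiTensorProduct.tprod_const_smul, smul_smul, neg_pow,
    show q ^ m = q ^ j * q ^ k by rw [hm, pow_add], Nat.mul_sub_sub_add_one_eq ha hb, hsign,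
    one_mul, bbgs_coefficient_eq hxi hxim t (one_le_two.trans ha) hb]
end

section
/- Let φ be the rank-m Drinfeld F_q[T]-module of characteristic T−1 with φ_T = −τ^m + g·τ^j + 1, where g = (x^{q^m} − x)/x^{q^j} for a nonzero T-torsion point x (i.e., −x^{q^m} + g·x^{q^j} + x = 0), and let k = m − j. Then λ = τ^k − x^{q^k−1} ∈ L{τ} satisfies λ·φ_T = ψ_T·λ where ψ_T = −τ^m + h·τ^j + 1 with h = (x^{q^m} − x)/x^{q^m − q^k + 1}; i.e., λ is an isogeny from φ to ψ. -/
/-!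
Write `q^n = p^{sn}` and `J, K, M = sj, sk, sm`, so that `J + K = M`. Composing `X^{p^K}`
after an additive polynomial raises its coefficients to the `p^K`-th power, so with
`c = x^{p^K - 1}` both sides of `λ·φ_T = ψ_T·λ` agree in degrees `p^{K+M}`, `p^K` and `1`, and
the identity reduces to the coefficient equations in degrees `p^M` and `p^J`:
`g^{p^K} + c = c^{p^M} + h` and `g c = h c^{p^J}`.
Multiplying by suitable powers of `x`, these become consequences of
`g x^{p^J} = x^{p^M} - x = h x^{p^M - p^K + 1}` and `c x = x^{p^K}`.
-/

open Polynomial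

section Frobenius

variable {R : Type*} [CommRing R] (p : ℕ) [ExpChar R p]

theorem X_pow_sub_C_mul_X_comp_eq {J K M : ℕ} (hM : J + K = M) {c g h : R}
    (htop : g ^ p ^ K + c = c ^ p ^ M + h) (hmid : g * c = h * c ^ p ^ J) :
    (X ^ p ^ K - C c * X).comp (-X ^ p ^ M + C g * X ^ p ^ J + X) =
      (-X ^ p ^ M + C h * X ^ p ^ J + X).comp (X ^ p ^ K - C c * X) := by
  subst hM
  simp only [sub_comp, add_comp, neg_comp, mul_comp, C_comp, X_comp, X_pow_comp]
  rw [← sub_eq_neg_add, add_pow_expChar_pow, sub_pow_expChar_pow, sub_pow_expChar_pow,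
    sub_pow_expChar_pow, mul_pow, mul_pow, mul_pow]
  simp only [← pow_mul, ← pow_add, ← C_pow]
  linear_combination (norm := (simp only [C_add, C_mul]; ring))
    (X ^ p ^ (J + K) : R[X]) * congr(C $htop) - X ^ p ^ J * congr(C $hmid)

end Frobenius

section Exponents

variable {α : Type*} [CommMonoid α] {a : ℕ}

theorem pow_sub_one_mul_pow_sub_add_one (x : α) {b : ℕ} (ha : 1 ≤ a) (hab : a ≤ b) :
    x ^ (a - 1) * x ^ (b - a + 1) = x ^ b := by
  rw [← pow_add]
  congr 1
  omega

theorem pow_sub_one_pow_mul_pow (x : α) (ha : 1 ≤ a) (n : ℕ) :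
    (x ^ (a - 1)) ^ n * x ^ n = x ^ (a * n) := by
  rw [← mul_pow, ← pow_succ, Nat.sub_add_cancel ha, pow_mul]

end Exponents

section Coefficients

variable {L : Type*} [Field L] {p J K M : ℕ} {x g h : L}

theorem mul_pow_sub_one_eq (hp : 0 < p) (hM : J + K = M) (hx : x ≠ 0)
    (hg : g * x ^ p ^ J = x ^ p ^ M - x) (hh : h * x ^ (p ^ M - p ^ K + 1) = x ^ p ^ M - x) :
    g * x ^ (p ^ K - 1) = h * (x ^ (p ^ K - 1)) ^ p ^ J := by
  have hK : 1 ≤ p ^ K := Nat.one_le_pow _ _ hp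
  have hcN := pow_sub_one_mul_pow_sub_add_one x hK (Nat.pow_le_pow_right hp (by omega : K ≤ M))
  have hcD := pow_sub_one_pow_mul_pow x hK (p ^ J)
  rw [← pow_add, add_comm, hM] at hcD
  refine mul_right_cancel₀ (mul_ne_zero (pow_ne_zero (p ^ J) hx)
    (pow_ne_zero (p ^ M - p ^ K + 1) hx)) ?_
  linear_combination x ^ (p ^ M - p ^ K + 1) * x ^ (p ^ K - 1) * hg + (x ^ p ^ M - x) * hcN
    - (x ^ (p ^ K - 1)) ^ p ^ J * x ^ p ^ J * hh - (x ^ p ^ M - x) * hcD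

theorem pow_add_pow_sub_one_eq [ExpChar L p] (hM : J + K = M) (hx : x ≠ 0)
    (hg : g * x ^ p ^ J = x ^ p ^ M - x) (hh : h * x ^ (p ^ M - p ^ K + 1) = x ^ p ^ M - x) :
    g ^ p ^ K + x ^ (p ^ K - 1) = (x ^ (p ^ K - 1)) ^ p ^ M + h := by
  have hK : 1 ≤ p ^ K := Nat.one_le_pow _ _ (expChar_pos L p)
  have hc : x ^ (p ^ K - 1) * x = x ^ p ^ K := by rw [← pow_succ, Nat.sub_add_cancel hK]
  have hcN := pow_sub_one_mul_pow_sub_add_one x hK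
    (Nat.pow_le_pow_right (expChar_pos L p) (by omega : K ≤ M))
  have hcM := pow_sub_one_pow_mul_pow x hK (p ^ M)
  have hgK : g ^ p ^ K * x ^ p ^ M = x ^ (p ^ K * p ^ M) - x ^ p ^ K := calc
    g ^ p ^ K * x ^ p ^ M = (g * x ^ p ^ J) ^ p ^ K := by rw [mul_pow, ← pow_mul, ← pow_add, hM]
    _ = x ^ (p ^ K * p ^ M) - x ^ p ^ K := by rw [hg, sub_pow_expChar_pow, ← pow_mul, mul_comm]
  refine mul_right_cancel₀ (mul_ne_zero (pow_ne_zero (p ^ M) hx) hx) ?_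
  linear_combination x * hgK + x * hc - x * hcM + h * x * hcN - x * x ^ (p ^ K - 1) * hh

end Coefficients

theorem bbgs_drinfeld_isogeny_general (p s q m j k : ℕ) (hp : p.Prime)
    (hq : q = p ^ s) (hjm : j ≤ m)
    (hk : k = m - j)
    (L : Type*) [Field L] [CharP L p]
    (x : L) (hx : x ≠ 0)
    (g h : L)
    (hg : g = (x ^ q ^ m - x) / x ^ q ^ j)
    (hh : h = (x ^ q ^ m - x) / x ^ (q ^ m - q ^ k + 1)) :
    (X ^ q ^ k - C (x ^ (q ^ k - 1)) * X : L[X]).comp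
        (-X ^ q ^ m + C g * X ^ q ^ j + X) =
      (-X ^ q ^ m + C h * X ^ q ^ j + X : L[X]).comp
        (X ^ q ^ k - C (x ^ (q ^ k - 1)) * X) := by
  have : Fact p.Prime := ⟨hp⟩
  subst hq
  simp only [← pow_mul] at hg hh ⊢
  have hM : s * j + s * k = s * m := by rw [← mul_add]; congr 1; omega
  have hg' : g * x ^ p ^ (s * j) = x ^ p ^ (s * m) - x := by
    rw [hg, div_mul_cancel₀ _ (pow_ne_zero _ hx)]
  have hh' : h * x ^ (p ^ (s * m) - p ^ (s * k) + 1) = x ^ p ^ (s * m) - x := by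
    rw [hh, div_mul_cancel₀ _ (pow_ne_zero _ hx)]
  exact X_pow_sub_C_mul_X_comp_eq p hM (pow_add_pow_sub_one_eq hM hx hg' hh')
    (mul_pow_sub_one_eq hp.pos hM hx hg' hh')

/-- **The BBGS isogeny of Drinfeld modules.**
Let `φ` be the rank-`m` Drinfeld `F_q[T]`-module of characteristic `T − 1` with
`φ_T = −τ^m + g·τ^j + 1`, where `g = (x^{q^m} − x)/x^{q^j}` for a nonzero `T`-torsion
point `x` (so `−x^{q^m} + g·x^{q^j} + x = 0`), and let `k = m − j`.  Identifying an
element `∑ aᵢ τ^i` of the twisted polynomial ring `L{τ}` with the additive polynomial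
`∑ aᵢ X^{q^i} ∈ L[X]` (so that multiplication in `L{τ}` becomes composition of
polynomials), the element `λ = τ^k − x^{q^k − 1}` satisfies `λ·φ_T = ψ_T·λ`, where
`ψ_T = −τ^m + h·τ^j + 1` and `h = (x^{q^m} − x)/x^{q^m − q^k + 1}`; i.e. `λ` is an
isogeny from `φ` to `ψ`. -/
theorem bbgs_drinfeld_isogeny (p s q m j k : ℕ) (hp : p.Prime) (hs : 0 < s)
    (hq : q = p ^ s) (hj : 0 < j) (hjm : j ≤ m) (hcop : Nat.gcd m j = 1)
    (hk : k = m - j)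
    (L : Type*) [Field L] [CharP L p]
    (x : L) (hx : x ≠ 0)
    (g h : L)
    (hg : g = (x ^ q ^ m - x) / x ^ q ^ j)
    (hh : h = (x ^ q ^ m - x) / x ^ (q ^ m - q ^ k + 1))
    (htors : -x ^ q ^ m + g * x ^ q ^ j + x = 0) :
    (X ^ q ^ k - C (x ^ (q ^ k - 1)) * X : L[X]).comp
        (-X ^ q ^ m + C g * X ^ q ^ j + X) =
      (-X ^ q ^ m + C h * X ^ q ^ j + X : L[X]).comp
        (X ^ q ^ k - C (x ^ (q ^ k - 1)) * X) :=
  bbgs_drinfeld_isogeny_general p s q m j k hp hq hjm hk L x hx g h hg hh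
end
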